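/- Let 𝓗 be a real Hilbert space, m > 0, and A : 𝓗 → 𝓗* a strongly monotone map with monotonicity constant m. Let R > 0 and 𝓑 = {u ∈ 𝓗 : ‖u‖ ≤ R}, and suppose the restriction of A to 𝓑 is Lipschitz continuous with Lipschitz constant M. Let f, g ∈ 𝓗* and suppose R ≥ (2/m)·‖A0 − f‖_{𝓗*} and R ≥ (2/m)·‖A0 − g‖_{𝓗*}. Then there exist unique u, v ∈ 𝓑 with Au = f and Av = g, and ‖u − v‖ ≤ (1/m)·‖f − g‖_{𝓗*}. -/

import Mathlib

/-!
A solution of `A u = f` is a fixed point of Zarantonello's map `u ↦ u - t • J (A u - f)`, where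
`J` is the Riesz isomorphism `𝓗* ≃ 𝓗`. For the step `t = m / M ^ 2`, the minimiser of
`1 - 2 t m + t² M²`, this map is a contraction on `𝓑` with constant
`√(1 - (m / M)²) ≤ 1 - (m / M)² / 2`, and the bound on `‖A 0 - f‖` makes it map `𝓑` into itself,
so Banach's fixed point theorem gives a solution in `𝓑`. Testing strong monotonicity against
`u - v` gives `m ‖u - v‖ ≤ ‖A u - A v‖`, which yields both uniqueness and the Lipschitz estimate.
-/

open Metric Set
open scoped RealInnerProductSpace

theorem norm_sub_smul_le_of_inner_ge {E : Type*} [NormedAddCommGroup E] [InnerProductSpace ℝ E]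
    {m M : ℝ} {x y : E} (hm : 0 < m) (hmM : m ≤ M) (hxy : m * ‖x‖ ^ 2 ≤ ⟪y, x⟫)
    (hy : ‖y‖ ≤ M * ‖x‖) :
    ‖x - (m / M ^ 2) • y‖ ≤ (1 - (m / M) ^ 2 / 2) * ‖x‖ := by
  have hM : 0 < M := hm.trans_le hmM
  have hq : (m / M) ^ 2 ≤ 1 := pow_le_one₀ (by positivity) ((div_le_one hM).mpr hmM)
  have hsq : ‖x - (m / M ^ 2) • y‖ ^ 2 ≤ (1 - (m / M) ^ 2) * ‖x‖ ^ 2 := calc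
    ‖x - (m / M ^ 2) • y‖ ^ 2 = ‖x‖ ^ 2 - 2 * (m / M ^ 2) * ⟪y, x⟫ + (m / M ^ 2) ^ 2 * ‖y‖ ^ 2 := by
      rw [norm_sub_sq_real, real_inner_smul_right, real_inner_comm, norm_smul,
        Real.norm_of_nonneg (by positivity)]
      ring
    _ ≤ ‖x‖ ^ 2 - 2 * (m / M ^ 2) * (m * ‖x‖ ^ 2) + (m / M ^ 2) ^ 2 * (M * ‖x‖) ^ 2 := by
      gcongr
    _ = (1 - (m / M) ^ 2) * ‖x‖ ^ 2 := by field_simp; ring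
  refine (pow_le_pow_iff_left₀ (norm_nonneg _)
    (mul_nonneg (by linarith) (norm_nonneg x)) two_ne_zero).mp ?_
  calc ‖x - (m / M ^ 2) • y‖ ^ 2 ≤ (1 - (m / M) ^ 2) * ‖x‖ ^ 2 := hsq
    _ ≤ ((1 - (m / M) ^ 2 / 2) * ‖x‖) ^ 2 := by nlinarith [sq_nonneg ((m / M) ^ 2 * ‖x‖)]

theorem mul_norm_sub_le_norm_sub_of_stronglyMonotone {E : Type*} [SeminormedAddCommGroup E]
    [NormedSpace ℝ E] {A : E → StrongDual ℝ E} {m : ℝ}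
    (hmono : ∀ u v, m * ‖u - v‖ ^ 2 ≤ (A u - A v) (u - v)) (u v : E) :
    m * ‖u - v‖ ≤ ‖A u - A v‖ := by
  rcases (norm_nonneg (u - v)).eq_or_lt with h | h
  · simp [← h]
  refine le_of_mul_le_mul_right ?_ h
  calc m * ‖u - v‖ * ‖u - v‖ = m * ‖u - v‖ ^ 2 := by ring
    _ ≤ (A u - A v) (u - v) := hmono u v
    _ ≤ ‖A u - A v‖ * ‖u - v‖ := (Real.le_norm_self _).trans ((A u - A v).le_opNorm _)

theorem eq_of_apply_eq_of_stronglyMonotone {E : Type*} [NormedAddCommGroup E] [NormedSpace ℝ E]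
    {A : E → StrongDual ℝ E} {m : ℝ} (hm : 0 < m)
    (hmono : ∀ u v, m * ‖u - v‖ ^ 2 ≤ (A u - A v) (u - v)) {u v : E} (h : A u = A v) :
    u = v := by
  have := mul_norm_sub_le_norm_sub_of_stronglyMonotone hmono u v
  rw [h, sub_self, norm_zero] at this
  exact sub_eq_zero.mp (norm_le_zero_iff.mp (nonpos_of_mul_nonpos_right this hm))

section Zarantonello

variable {E : Type*} [NormedAddCommGroup E] [InnerProductSpace ℝ E] [CompleteSpace E]

noncomputable def zarantonelloMap (A : E → StrongDual ℝ E) (f : StrongDual ℝ E) (t : ℝ) (u : E) :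
    E :=
  u - t • (InnerProductSpace.toDual ℝ E).symm (A u - f)

variable {A : E → StrongDual ℝ E} {f : StrongDual ℝ E} {m M R t : ℝ}

theorem zarantonelloMap_sub (u v : E) :
    zarantonelloMap A f t u - zarantonelloMap A f t v =
      (u - v) - t • (InnerProductSpace.toDual ℝ E).symm (A u - A v) := by
  simp only [zarantonelloMap, map_sub, smul_sub]
  abel

theorem zarantonelloMap_eq_self_iff (ht : t ≠ 0) {u : E} :
    zarantonelloMap A f t u = u ↔ A u = f := by
  simp [zarantonelloMap, ht, sub_eq_zero]

theorem norm_zarantonelloMap_sub_le (hm : 0 < m) (hmM : m ≤ M)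
    (hmono : ∀ u v, m * ‖u - v‖ ^ 2 ≤ (A u - A v) (u - v))
    (hlip : ∀ u v : E, ‖u‖ ≤ R → ‖v‖ ≤ R → ‖A u - A v‖ ≤ M * ‖u - v‖)
    {u v : E} (hu : ‖u‖ ≤ R) (hv : ‖v‖ ≤ R) :
    ‖zarantonelloMap A f (m / M ^ 2) u - zarantonelloMap A f (m / M ^ 2) v‖ ≤
      (1 - (m / M) ^ 2 / 2) * ‖u - v‖ := by
  rw [zarantonelloMap_sub]
  refine norm_sub_smul_le_of_inner_ge hm hmM ?_ ?_
  · rw [InnerProductSpace.toDual_symm_apply]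
    exact hmono u v
  · rw [LinearIsometryEquiv.norm_map]
    exact hlip u v hu hv

theorem mapsTo_zarantonelloMap_closedBall (hm : 0 < m) (hmM : m ≤ M)
    (hmono : ∀ u v, m * ‖u - v‖ ^ 2 ≤ (A u - A v) (u - v))
    (hlip : ∀ u v : E, ‖u‖ ≤ R → ‖v‖ ≤ R → ‖A u - A v‖ ≤ M * ‖u - v‖)
    (hRf : 2 / m * ‖A 0 - f‖ ≤ R) :
    MapsTo (zarantonelloMap A f (m / M ^ 2)) (closedBall 0 R) (closedBall 0 R) := by
  intro u hu
  rw [mem_closedBall_zero_iff] at hu ⊢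
  have hM : 0 < M := hm.trans_le hmM
  have hR : 0 ≤ R := (by positivity : (0 : ℝ) ≤ _).trans hRf
  have hT0 : ‖zarantonelloMap A f (m / M ^ 2) 0‖ ≤ (m / M) ^ 2 / 2 * R := calc
    ‖zarantonelloMap A f (m / M ^ 2) 0‖ = m / M ^ 2 * ‖A 0 - f‖ := by
      rw [zarantonelloMap, zero_sub, norm_neg, norm_smul, LinearIsometryEquiv.norm_map,
        Real.norm_of_nonneg (by positivity)]
    _ = (m / M) ^ 2 / 2 * (2 / m * ‖A 0 - f‖) := by field_simp
    _ ≤ (m / M) ^ 2 / 2 * R := by gcongr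
  calc ‖zarantonelloMap A f (m / M ^ 2) u‖
      ≤ ‖zarantonelloMap A f (m / M ^ 2) u - zarantonelloMap A f (m / M ^ 2) 0‖
        + ‖zarantonelloMap A f (m / M ^ 2) 0‖ := norm_le_norm_sub_add _ _
    _ ≤ (1 - (m / M) ^ 2 / 2) * ‖u - 0‖ + (m / M) ^ 2 / 2 * R :=
      add_le_add (norm_zarantonelloMap_sub_le hm hmM hmono hlip hu (norm_zero.trans_le hR)) hT0
    _ ≤ (1 - (m / M) ^ 2 / 2) * R + (m / M) ^ 2 / 2 * R := by
      have : (m / M) ^ 2 ≤ 1 := pow_le_one₀ (by positivity) ((div_le_one hM).mpr hmM)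
      rw [sub_zero]
      gcongr
      linarith
    _ = R := by ring

theorem exists_apply_eq_of_stronglyMonotone (hm : 0 < m) (hmM : m ≤ M)
    (hmono : ∀ u v, m * ‖u - v‖ ^ 2 ≤ (A u - A v) (u - v))
    (hlip : ∀ u v : E, ‖u‖ ≤ R → ‖v‖ ≤ R → ‖A u - A v‖ ≤ M * ‖u - v‖)
    (hRf : 2 / m * ‖A 0 - f‖ ≤ R) :
    ∃ u : E, ‖u‖ ≤ R ∧ A u = f := by
  have hM : 0 < M := hm.trans_le hmM
  have hR : 0 ≤ R := (by positivity : (0 : ℝ) ≤ _).trans hRf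
  have hmaps := mapsTo_zarantonelloMap_closedBall hm hmM hmono hlip hRf
  have hlipT : LipschitzOnWith (1 - (m / M) ^ 2 / 2).toNNReal
      (zarantonelloMap A f (m / M ^ 2)) (closedBall 0 R) :=
    LipschitzOnWith.of_dist_le' fun u hu v hv => by
      rw [mem_closedBall_zero_iff] at hu hv
      simpa only [dist_eq_norm] using norm_zarantonelloMap_sub_le hm hmM hmono hlip hu hv
  have hκ : (1 - (m / M) ^ 2 / 2).toNNReal < 1 :=
    Real.toNNReal_lt_one.mpr (sub_lt_self 1 (by positivity))
  obtain ⟨u, hu, hfix, -⟩ := ContractingWith.exists_fixedPoint' isClosed_closedBall.isComplete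
    hmaps ⟨hκ, hlipT.mapsToRestrict hmaps⟩ (mem_closedBall_self hR) (edist_ne_top _ _)
  exact ⟨u, mem_closedBall_zero_iff.mp hu,
    (zarantonelloMap_eq_self_iff (by positivity)).mp hfix⟩

end Zarantonello

theorem solutions_depend_lipschitz_on_data_general
    {𝓗 : Type*} [NormedAddCommGroup 𝓗] [InnerProductSpace ℝ 𝓗] [CompleteSpace 𝓗]
    (m : ℝ) (hm : 0 < m) (A : 𝓗 → StrongDual ℝ 𝓗)
    (hmono : ∀ u v : 𝓗, m * ‖u - v‖ ^ 2 ≤ (A u - A v) (u - v))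
    (R : ℝ) (M : ℝ) (hmM : m ≤ M)
    (hlip : ∀ u v : 𝓗, ‖u‖ ≤ R → ‖v‖ ≤ R → ‖A u - A v‖ ≤ M * ‖u - v‖)
    (f g : StrongDual ℝ 𝓗)
    (hRf : 2 / m * ‖A 0 - f‖ ≤ R) (hRg : 2 / m * ‖A 0 - g‖ ≤ R) :
    ∃ u v : 𝓗, ‖u‖ ≤ R ∧ ‖v‖ ≤ R ∧ A u = f ∧ A v = g ∧
      (∀ w : 𝓗, ‖w‖ ≤ R → A w = f → w = u) ∧
      (∀ w : 𝓗, ‖w‖ ≤ R → A w = g → w = v) ∧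
      ‖u - v‖ ≤ 1 / m * ‖f - g‖ := by
  obtain ⟨u, hu, rfl⟩ := exists_apply_eq_of_stronglyMonotone hm hmM hmono hlip hRf
  obtain ⟨v, hv, rfl⟩ := exists_apply_eq_of_stronglyMonotone hm hmM hmono hlip hRg
  refine ⟨u, v, hu, hv, rfl, rfl, fun w _ hw => eq_of_apply_eq_of_stronglyMonotone hm hmono hw,
    fun w _ hw => eq_of_apply_eq_of_stronglyMonotone hm hmono hw, ?_⟩
  rw [one_div_mul_eq_div, le_div_iff₀' hm]
  exact mul_norm_sub_le_norm_sub_of_stronglyMonotone hmono u v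

/-- **Lipschitz dependence of the solution on the right-hand side.**
Let `𝓗` be a real Hilbert space, `A : 𝓗 → 𝓗*` strongly monotone with constant `m > 0`,
Lipschitz with constant `M` on the closed ball `𝓑` of radius `R`.  If `f, g ∈ 𝓗*` with
`R ≥ (2/m)·‖A0 - f‖` and `R ≥ (2/m)·‖A0 - g‖`, then there are unique `u, v ∈ 𝓑` with
`Au = f`, `Av = g`, and moreover `‖u - v‖ ≤ (1/m)·‖f - g‖`. -/
theorem solutions_depend_lipschitz_on_data
    {𝓗 : Type*} [NormedAddCommGroup 𝓗] [InnerProductSpace ℝ 𝓗] [CompleteSpace 𝓗]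
    (m : ℝ) (hm : 0 < m) (A : 𝓗 → StrongDual ℝ 𝓗)
    (hmono : ∀ u v : 𝓗, m * ‖u - v‖ ^ 2 ≤ (A u - A v) (u - v))
    (R : ℝ) (hR : 0 < R) (M : ℝ) (hmM : m ≤ M)
    (hlip : ∀ u v : 𝓗, ‖u‖ ≤ R → ‖v‖ ≤ R → ‖A u - A v‖ ≤ M * ‖u - v‖)
    (f g : StrongDual ℝ 𝓗)
    (hRf : 2 / m * ‖A 0 - f‖ ≤ R) (hRg : 2 / m * ‖A 0 - g‖ ≤ R) :
    ∃ u v : 𝓗, ‖u‖ ≤ R ∧ ‖v‖ ≤ R ∧ A u = f ∧ A v = g ∧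
      (∀ w : 𝓗, ‖w‖ ≤ R → A w = f → w = u) ∧
      (∀ w : 𝓗, ‖w‖ ≤ R → A w = g → w = v) ∧
      ‖u - v‖ ≤ 1 / m * ‖f - g‖ :=
  solutions_depend_lipschitz_on_data_general m hm A hmono R M hmM hlip f g hRf hRg
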